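/- Let G be a two-strategy n-player anonymous game with utilities u^i_j : {0,...,n−1} → [0,1], and define the self-anonymous game Ḡ by ū^i_2(0) = 1/2, ū^i_1(x) = ū^i_2(x) + (u^i_1(x) − u^i_2(x))/(2n) for all x ∈ {0,...,n−1}, and ū^i_2(x+1) = ū^i_1(x). Then a mixed-strategy profile (p_1,...,p_n) is an ε-approximate Nash equilibrium of G if and only if it is an (ε/(2n))-approximate Nash equilibrium of Ḡ. -/
import Mathlib


/-- Probability that exactly `x` of the players in `T`, who independently play
strategy 1 with probabilities `p`, play strategy 1 (Poisson binomial). -/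
noncomputable def pb (n : ℕ) (T : Finset (Fin n)) (p : Fin n → ℝ) (x : ℕ) : ℝ :=
  ∑ S ∈ T.powersetCard x, (∏ j ∈ S, p j) * ∏ j ∈ T \ S, (1 - p j)

/-- Expected utility of player `i` for playing pure strategy `j`
(strategy `0` is "strategy 1", strategy `1` is "strategy 2") when the other
players play strategy 1 with probabilities `p`. -/
noncomputable def EU (n : ℕ) (u : Fin n → Fin 2 → ℕ → ℝ) (p : Fin n → ℝ)
    (i : Fin n) (j : Fin 2) : ℝ :=
  ∑ x ∈ Finset.range n, u i j x * pb n (Finset.univ.erase i) p x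

/-- `p` is an `ε`-approximate Nash equilibrium of the two-strategy anonymous
game with utilities `u`. -/
def IsEpsNE (n : ℕ) (u : Fin n → Fin 2 → ℕ → ℝ) (p : Fin n → ℝ) (ε : ℝ) : Prop :=
  ∀ i : Fin n, ∀ j : Fin 2,
    p i * EU n u p i 0 + (1 - p i) * EU n u p i 1 + ε ≥ EU n u p i j

/-- Strategy-2 payoffs of the self-anonymous game `Ḡ` built from `G`:
`ū^i_2(0) = 1/2` and `ū^i_2(x+1) = ū^i_2(x) + (u^i_1(x) - u^i_2(x))/(2n)`. -/
noncomputable def ubar2 (n : ℕ) (u : Fin n → Fin 2 → ℕ → ℝ) (i : Fin n) : ℕ → ℝ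
  | 0 => 1 / 2
  | x + 1 => ubar2 n u i x + (u i 0 x - u i 1 x) / (2 * n)

/-- The full payoff function of `Ḡ`: `ū^i_1(x) = ū^i_2(x+1)`. -/
noncomputable def ubar (n : ℕ) (u : Fin n → Fin 2 → ℕ → ℝ) (i : Fin n)
    (j : Fin 2) (x : ℕ) : ℝ :=
  if j = 0 then ubar2 n u i (x + 1) else ubar2 n u i x


lemma ne_iff (n : ℕ) (u : Fin n → Fin 2 → ℕ → ℝ) (p : Fin n → ℝ) (ε : ℝ) :
    IsEpsNE n u p ε ↔ ∀ i,
      (1 - p i) * (EU n u p i 0 - EU n u p i 1) ≤ ε ∧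
      p i * (EU n u p i 1 - EU n u p i 0) ≤ ε := by
  unfold IsEpsNE
  constructor
  · intro h i
    have h0 := h i 0
    have h1 := h i 1
    constructor <;> nlinarith
  · intro h i j
    obtain ⟨h1, h2⟩ := h i
    fin_cases j
    · show p i * EU n u p i 0 + (1 - p i) * EU n u p i 1 + ε ≥ EU n u p i 0
      nlinarith
    · show p i * EU n u p i 0 + (1 - p i) * EU n u p i 1 + ε ≥ EU n u p i 1
      nlinarith

lemma EUbar_sub (n : ℕ) (u : Fin n → Fin 2 → ℕ → ℝ) (p : Fin n → ℝ) (i : Fin n) :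
    EU n (ubar n u) p i 0 - EU n (ubar n u) p i 1
      = (EU n u p i 0 - EU n u p i 1) / (2 * n) := by
  unfold EU ubar
  rw [← Finset.sum_sub_distrib, ← Finset.sum_sub_distrib, Finset.sum_div]
  refine Finset.sum_congr rfl fun x _ => ?_
  simp only [ubar2]
  norm_num
  ring

theorem stmt18 (n : ℕ) (hn : 1 ≤ n) (u : Fin n → Fin 2 → ℕ → ℝ)
    (hu : ∀ i j x, x < n → 0 ≤ u i j x ∧ u i j x ≤ 1)
    (p : Fin n → ℝ) (hp : ∀ i, 0 ≤ p i ∧ p i ≤ 1) (ε : ℝ) :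
    IsEpsNE n u p ε ↔ IsEpsNE n (ubar n u) p (ε / (2 * n)) := by
  have h2n : (0:ℝ) < 2 * n := by positivity
  rw [ne_iff, ne_iff]
  have hsub := EUbar_sub n u p
  have key : ∀ i : Fin n,
      EU n (ubar n u) p i 1 - EU n (ubar n u) p i 0
        = (EU n u p i 1 - EU n u p i 0) / (2 * n) := by
    intro i
    have := hsub i
    rw [show EU n u p i 1 - EU n u p i 0 = -(EU n u p i 0 - EU n u p i 1) by ring,
      neg_div]
    linarith
  constructor
  · intro h i
    obtain ⟨h1, h2⟩ := h i
    rw [hsub i, key i, mul_div_assoc', mul_div_assoc']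
    exact ⟨(div_le_div_iff_of_pos_right h2n).2 h1, (div_le_div_iff_of_pos_right h2n).2 h2⟩
  · intro h i
    obtain ⟨h1, h2⟩ := h i
    rw [hsub i, mul_div_assoc'] at h1
    rw [key i, mul_div_assoc'] at h2
    exact ⟨(div_le_div_iff_of_pos_right h2n).1 h1, (div_le_div_iff_of_pos_right h2n).1 h2⟩
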